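/- For every ε > 0 there exists n such that the pair p_n = A(BA(Aⁿ(1/6,2/3))) satisfies p_n ≠ (1/6,2/3), |p_n − (1/6,2/3)| < ε, and p_n ≺ (1/6,2/3) (i.e., the first coordinate of p_n is less than 1/6 and the second greater than 2/3); hence (1/6,2/3) is not isolated from the left in the order ≺. -/

import Mathlib

/-!
The map `A` sends a point `(1/m, 1 - c/m)` to `(1/m', 1 - (c+1)/m')` with `m' = 2(m+1)`, so
`Aⁿ(1/6, 2/3) = (1/(8·2ⁿ - 2), 1 - (n+2)/(8·2ⁿ - 2))`. Applying `A ∘ B ∘ A` gives the closed form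
`p_n = (1/6, 2/3) + (-(2n+6), n+6) / (144·2ⁿ - 6n - 36)`, so `p_n ≺ (1/6, 2/3)` and the distance
is `O(n/2ⁿ)`.
-/

noncomputable def expA (p : ℝ × ℝ) : ℝ × ℝ :=
  (p.1 / (2 * (p.1 + 1)), (p.1 + p.2 + 1) / (2 * (p.1 + 1)))

noncomputable def expB (p : ℝ × ℝ) : ℝ × ℝ := (p.2 - 1/2, p.1 + 1/2)

noncomputable def expBA (p : ℝ × ℝ) : ℝ × ℝ := expB (expA p)

noncomputable def pSeq (n : ℕ) : ℝ × ℝ := expA (expBA (expA^[n] (1/6, 2/3)))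

open Filter Topology

lemma expA_inv_one_sub_div (m c : ℝ) (hm : m ≠ 0) (hm' : m + 1 ≠ 0) :
    expA (1 / m, 1 - c / m) = (1 / (2 * (m + 1)), 1 - (c + 1) / (2 * (m + 1))) := by
  have h : 1 / m + 1 = (m + 1) / m := by field_simp; ring
  simp only [expA, h, Prod.mk.injEq]
  constructor
  · field_simp
  · field_simp
    ring

lemma expA_expB_inv_one_sub_div (m c : ℝ) (hm : m ≠ 0) (hmc : 3 * m - 2 * c ≠ 0) :
    expA (expB (1 / m, 1 - c / m)) =
      (1/6 - 2 * c / (3 * (3 * m - 2 * c)), 2/3 + (c + 3) / (3 * (3 * m - 2 * c))) := by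
  have h : 1 - c / m - 1 / 2 + 1 = (3 * m - 2 * c) / (2 * m) := by field_simp; ring
  -- the form in which `field_simp` looks for the nonvanishing of the denominator
  have hmc' : m * 3 - c * 2 ≠ 0 := by rwa [mul_comm m, mul_comm c]
  simp only [expA, expB, h, Prod.mk.injEq]
  constructor
  · field_simp
    ring
  · field_simp
    ring

lemma expA_iterate_init (n : ℕ) :
    expA^[n] (1/6, 2/3) = ((1 : ℝ) / (8 * 2 ^ n - 2), 1 - ((n : ℝ) + 2) / (8 * 2 ^ n - 2)) := by
  induction n with
  | zero => norm_num
  | succ n ih =>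
    have hP : (1 : ℝ) ≤ 2 ^ n := one_le_pow₀ one_le_two
    rw [Function.iterate_succ_apply', ih, expA_inv_one_sub_div _ _ (by linarith) (by linarith)]
    push_cast
    ring_nf

noncomputable def pSeqDenom (n : ℕ) : ℝ := 144 * 2 ^ n - 6 * n - 36

lemma three_mul_two_pow_le_pSeqDenom (n : ℕ) : 3 * (2 : ℝ) ^ n ≤ pSeqDenom n := by
  have hn : (n : ℝ) + 1 ≤ 2 ^ n := by exact_mod_cast Nat.lt_two_pow_self
  unfold pSeqDenom
  linarith

lemma pSeqDenom_pos (n : ℕ) : 0 < pSeqDenom n :=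
  (by positivity : (0 : ℝ) < 3 * 2 ^ n).trans_le (three_mul_two_pow_le_pSeqDenom n)

lemma pSeq_eq (n : ℕ) :
    pSeq n = (1/6 - (2 * n + 6) / pSeqDenom n, 2/3 + (n + 6) / pSeqDenom n) := by
  have hP : (1 : ℝ) ≤ 2 ^ n := one_le_pow₀ one_le_two
  have hd := pSeqDenom_pos n
  unfold pSeqDenom at hd ⊢
  rw [pSeq, expBA, ← Function.iterate_succ_apply' expA, expA_iterate_init,
    expA_expB_inv_one_sub_div _ _ (by rw [pow_succ]; linarith)
      (by rw [pow_succ]; push_cast; linarith)]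
  rw [pow_succ]
  push_cast
  ring_nf

lemma pSeq_fst_lt (n : ℕ) : (pSeq n).1 < 1/6 := by
  have := pSeqDenom_pos n
  rw [pSeq_eq, sub_lt_self_iff]
  positivity

lemma pSeq_snd_gt (n : ℕ) : 2/3 < (pSeq n).2 := by
  have := pSeqDenom_pos n
  rw [pSeq_eq, lt_add_iff_pos_right]
  positivity

lemma sqrt_sq_add_sq_le_abs_add_abs (a b : ℝ) : √(a ^ 2 + b ^ 2) ≤ |a| + |b| := by
  rw [Real.sqrt_le_left (by positivity)]
  nlinarith [sq_abs a, sq_abs b, abs_nonneg a, abs_nonneg b]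

lemma dist_pSeq_le (n : ℕ) :
    √(((pSeq n).1 - 1/6) ^ 2 + ((pSeq n).2 - 2/3) ^ 2) ≤ (n + 4) / 2 ^ n := by
  have hd := pSeqDenom_pos n
  refine (sqrt_sq_add_sq_le_abs_add_abs _ _).trans ?_
  rw [pSeq_eq]
  calc _ = 3 * (n + 4) / pSeqDenom n := by
        simp only [sub_sub_cancel_left, add_sub_cancel_left, abs_neg]
        rw [abs_of_pos (by positivity), abs_of_pos (by positivity)]
        ring
    _ ≤ 3 * (n + 4) / (3 * 2 ^ n) := by gcongr; exact three_mul_two_pow_le_pSeqDenom n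
    _ = (n + 4) / 2 ^ n := by field_simp

lemma tendsto_dist_pSeq :
    Tendsto (fun n => √(((pSeq n).1 - 1/6) ^ 2 + ((pSeq n).2 - 2/3) ^ 2)) atTop (𝓝 0) := by
  have h : Tendsto (fun n : ℕ => (n : ℝ) ^ 1 / 2 ^ n + 4 * (1 / 2) ^ n) atTop (𝓝 0) := by
    simpa using (tendsto_pow_const_div_const_pow_of_one_lt 1 one_lt_two).add
      ((tendsto_pow_atTop_nhds_zero_of_lt_one (by norm_num) (by norm_num : (1/2 : ℝ) < 1)).const_mul 4)
  refine squeeze_zero (fun n => Real.sqrt_nonneg _) (fun n => (dist_pSeq_le n).trans_eq ?_) h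
  rw [one_div_pow]
  field_simp

theorem stmt_19 (ε : ℝ) (hε : 0 < ε) :
    ∃ n : ℕ, pSeq n ≠ (1/6, 2/3) ∧
      Real.sqrt (((pSeq n).1 - 1/6) ^ 2 + ((pSeq n).2 - 2/3) ^ 2) < ε ∧
      (pSeq n).1 < 1/6 ∧ (pSeq n).2 > 2/3 := by
  obtain ⟨n, hn⟩ := (tendsto_dist_pSeq.eventually (gt_mem_nhds hε)).exists
  exact ⟨n, fun h => (pSeq_fst_lt n).ne (congrArg Prod.fst h), hn, pSeq_fst_lt n, pSeq_snd_gt n⟩
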